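/- For a composition μ of m and the permutation σ_μ of {1,...,m} given by the product of disjoint cycles of lengths μ_1,...,μ_l, the map (ξ, f, {g_P}) ↦ η(ξ, f, {g_P}) is injective: distinct data give distinct σ_μ-invariant set partitions of {1,...,m}. -/

import Mathlib

/-- The permutation `σ_μ` of `{0,…,m-1}` (0-indexed) attached to a composition
`μ = (μ_1,…,μ_l)` of `m`: the product of the cycles on the consecutive blocks
of sizes `μ_1, …, μ_l`. -/
def sigmaC : List ℕ → ℕ → ℕ
  | [], x => x
  | c :: rest, x => if x < c then (x + 1) % c else c + sigmaC rest (x - c)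

/-- `a i = μ_1 + ⋯ + μ_i`. -/
def partialSum (μ : List ℕ) (i : ℕ) : ℕ := (μ.take i).sum

/-- `PP` is a set partition of `{0,…,m-1}`. -/
def IsPartitionOn (m : ℕ) (PP : Set (Set ℕ)) : Prop :=
  (∀ B ∈ PP, B.Nonempty ∧ B ⊆ Set.Iio m) ∧ ∀ x < m, ∃! B, B ∈ PP ∧ x ∈ B

/-- `PP` is fixed (setwise) by `σ`: the permutation permutes the parts. -/
def Invariant (σ : ℕ → ℕ) (PP : Set (Set ℕ)) : Prop := ∀ B ∈ PP, σ '' B ∈ PP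

/-- The common refinement of two set partitions. -/
def commonRefinement (PP QQ : Set (Set ℕ)) : Set (Set ℕ) :=
  {S | ∃ B ∈ PP, ∃ C ∈ QQ, S = B ∩ C ∧ S.Nonempty}

/-- The datum `(ξ, f, {g_P})` of the construction `η`: a set partition `ξ` of
`{0,…,l-1}` (`l` = number of parts of `μ`), a choice for each part `P` of `ξ`
of a common divisor `f P` of the `μ_i`, `i ∈ P`, and normalized functions
`g_P : P → {0,…,f(P)-1}` with `g_P(min P) = 0`. -/
structure EtaDatum (μ : List ℕ) where
  xi : Set (Set ℕ)
  f : Set ℕ → ℕ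
  g : Set ℕ → ℕ → ℕ
  hxi : IsPartitionOn μ.length xi
  hf : ∀ P ∈ xi, ∀ i ∈ P, f P ∣ μ.getD i 0
  hf0 : ∀ P, P ∉ xi → f P = 0
  hg : ∀ P ∈ xi, ∀ i ∈ P, g P i < f P
  hg0 : ∀ P i, P ∉ xi ∨ i ∉ P → g P i = 0
  hgmin : ∀ P ∈ xi, g P (sInf P) = 0

/-- The set `N_P = ∪_{i∈P} {a_i + g_P(i) + j·f(P) : 0 ≤ j < μ_i / f(P)}`. -/
def NP (μ : List ℕ) (D : EtaDatum μ) (P : Set ℕ) : Set ℕ :=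
  ⋃ i ∈ P, {x | ∃ j : ℕ, j * D.f P < μ.getD i 0 ∧
    x = partialSum μ i + D.g P i + j * D.f P}

/-- The set partition `η(ξ, f, {g_P})`, whose parts are the sets
`σ_μ^r(N_P)` for parts `P` of `ξ` and `r ≥ 1`. -/
def eta (μ : List ℕ) (D : EtaDatum μ) : Set (Set ℕ) :=
  {S | ∃ P ∈ D.xi, ∃ r : ℕ, 1 ≤ r ∧ S = (sigmaC μ)^[r] '' NP μ D P}

/-!
Write the points of the `i`-th cycle of `σ_μ` as `a_i + t` with `t < μ_i`; then `σ_μ^r` acts on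
the cycle as `t ↦ (t + r) mod μ_i`. The set `N_P` meets the `i`-th cycle (for `i ∈ P`) in the
residue class of `g_P(i)` modulo `f(P)`, and since `f(P) ∣ μ_i` the rotation `σ_μ^r` carries it to
the class of `g_P(i) + r`. In particular `σ_μ^{f(P)}` fixes `N_P`, so `N_P` is itself a part of
`η`. If two data give the same `η`, then `N_P = σ_μ^r(N'_Q)` for some part `Q` of `ξ'`; comparing
the traces on each cycle gives `P = Q`, and a residue class modulo a divisor of `μ_i`, viewed inside
`{0, …, μ_i - 1}`, determines both the divisor and the residue, so `f(P) = f'(P)` and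
`g_P ≡ g'_P + r`. The normalisation `g_P(min P) = 0 = g'_P(min P)` then forces `r ≡ 0`.
-/

namespace Nat

theorem exists_lt_add_mod_eq {M s : ℕ} (r : ℕ) (hs : s < M) : ∃ t < M, (t + r) % M = s := by
  refine ⟨(s + (M - r % M)) % M, Nat.mod_lt _ (by omega), ?_⟩
  have hr := Nat.mod_lt r (show 0 < M by omega)
  have hsum : s + (M - r % M) + r = s + M * (r / M + 1) := by
    have := Nat.mod_add_div r M
    rw [mul_add]
    omega
  rw [Nat.mod_add_mod, hsum, Nat.add_mul_mod_self_left, Nat.mod_eq_of_lt hs]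

theorem exists_lt_modEq_add_mod_eq_iff {M f s a r : ℕ} (hf : f ∣ M) (hs : s < M) :
    (∃ t < M, t ≡ a [MOD f] ∧ (t + r) % M = s) ↔ s ≡ a + r [MOD f] := by
  constructor
  · rintro ⟨t, -, ht, rfl⟩
    exact ((Nat.mod_modEq _ _).of_dvd hf).trans (ht.add_right r)
  · intro hsa
    obtain ⟨t, htM, rfl⟩ := exists_lt_add_mod_eq r hs
    refine ⟨t, htM, Nat.ModEq.add_right_cancel' r ?_, rfl⟩
    exact ((Nat.mod_modEq _ _).of_dvd hf).symm.trans hsa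

theorem le_of_forall_lt_modEq_iff {M f f' a b : ℕ} (hM : 0 < M) (hf : f ∣ M) (hf' : f' ∣ M)
    (h : ∀ t < M, t ≡ a [MOD f] ↔ t ≡ b [MOD f']) : f' ≤ f := by
  obtain rfl | hfM := (Nat.le_of_dvd hM hf).eq_or_lt
  · exact Nat.le_of_dvd hM hf'
  have hf0 : 0 < f := Nat.pos_of_dvd_of_pos hf hM
  -- a proper divisor is at most half of `M`, so the second residue `a % f + f` still lies below `M`
  have h2f : 2 * f ≤ M := by
    obtain ⟨k, rfl⟩ := hf
    have : 2 ≤ k := by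
      by_contra hk
      interval_cases k <;> omega
    nlinarith
  have hlt := Nat.mod_lt a hf0
  have h0 := (h (a % f) (by omega)).1 (Nat.mod_modEq a f)
  have h1 := (h (a % f + f) (by omega)).1 (Nat.add_modEq_right.trans (Nat.mod_modEq a f))
  exact Nat.le_of_dvd hf0 (Nat.add_modEq_left_iff.1 (h1.trans h0.symm))

theorem eq_and_modEq_of_forall_lt_modEq_iff {M f f' a b : ℕ} (hM : 0 < M) (hf : f ∣ M)
    (hf' : f' ∣ M) (h : ∀ t < M, t ≡ a [MOD f] ↔ t ≡ b [MOD f']) : f = f' ∧ a ≡ b [MOD f] := by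
  have hff' : f = f' := le_antisymm
    (le_of_forall_lt_modEq_iff hM hf' hf fun t ht => (h t ht).symm)
    (le_of_forall_lt_modEq_iff hM hf hf' h)
  subst hff'
  have hlt := Nat.mod_lt a (Nat.pos_of_dvd_of_pos hf hM)
  exact ⟨rfl, (Nat.mod_modEq a f).symm.trans
    ((h _ (lt_of_lt_of_le hlt (Nat.le_of_dvd hM hf))).1 (Nat.mod_modEq a f))⟩

theorem exists_mul_lt_eq_add_mul_iff {M f g t : ℕ} (hf : f ∣ M) (hg : g < f) :
    (∃ j, j * f < M ∧ t = g + j * f) ↔ t < M ∧ t ≡ g [MOD f] := by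
  constructor
  · rintro ⟨j, hj, rfl⟩
    refine ⟨?_, by simp [Nat.ModEq]⟩
    -- `j * f` and `M` are multiples of `f`, so `j * f + f ≤ M`
    obtain ⟨k, rfl⟩ := hf
    have : j < k := by nlinarith
    nlinarith
  · rintro ⟨htM, ht⟩
    refine ⟨t / f, lt_of_le_of_lt (Nat.div_mul_le_self t f) htM, ?_⟩
    have := Nat.mod_add_div' t f
    rw [Nat.ModEq, Nat.mod_eq_of_lt hg] at ht
    omega

end Nat

theorem partialSum_succ (μ : List ℕ) (i : ℕ) :
    partialSum μ (i + 1) = partialSum μ i + μ.getD i 0 := by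
  simp only [partialSum, List.take_add_one, List.sum_append, List.getD_eq_getElem?_getD]
  cases μ[i]? <;> simp

theorem partialSum_mono (μ : List ℕ) : Monotone (partialSum μ) :=
  monotone_nat_of_le_succ fun i => (partialSum_succ μ i).symm ▸ Nat.le_add_right _ _

theorem partialSum_add_lt {μ : List ℕ} {i j t : ℕ} (hij : i < j) (ht : t < μ.getD i 0) :
    partialSum μ i + t < partialSum μ j := by
  have := partialSum_mono μ (Nat.succ_le_of_lt hij)
  rw [partialSum_succ] at this
  omega

theorem partialSum_add_inj {μ : List ℕ} {i i' t t' : ℕ} (ht : t < μ.getD i 0)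
    (ht' : t' < μ.getD i' 0) (h : partialSum μ i + t = partialSum μ i' + t') :
    i = i' ∧ t = t' := by
  rcases lt_trichotomy i i' with hii' | rfl | hii'
  · have := partialSum_add_lt hii' ht
    omega
  · exact ⟨rfl, by omega⟩
  · have := partialSum_add_lt hii' ht'
    omega

theorem sigmaC_partialSum_add {μ : List ℕ} {i t : ℕ} (ht : t < μ.getD i 0) :
    sigmaC μ (partialSum μ i + t) = partialSum μ i + (t + 1) % μ.getD i 0 := by
  induction μ generalizing i with
  | nil => simp at ht
  | cons c rest ih =>
    cases i with
    | zero => simp_all [sigmaC, partialSum]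
    | succ i =>
      simp only [List.getD_cons_succ] at ht ⊢
      have hps : partialSum (c :: rest) (i + 1) = c + partialSum rest i := by simp [partialSum]
      rw [hps, sigmaC, if_neg (by omega), add_assoc, Nat.add_sub_cancel_left, ih ht, add_assoc]

theorem iterate_sigmaC_partialSum_add {μ : List ℕ} {i t : ℕ} (ht : t < μ.getD i 0) (r : ℕ) :
    (sigmaC μ)^[r] (partialSum μ i + t) = partialSum μ i + (t + r) % μ.getD i 0 := by
  induction r with
  | zero => rw [Nat.add_zero, Nat.mod_eq_of_lt ht]; rfl
  | succ r ih =>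
    rw [Function.iterate_succ_apply', ih, sigmaC_partialSum_add (Nat.mod_lt _ (by omega)),
      Nat.mod_add_mod, add_assoc]

def blockSet (μ : List ℕ) (A : ℕ → Set ℕ) : Set ℕ :=
  {x | ∃ i, ∃ t < μ.getD i 0, t ∈ A i ∧ x = partialSum μ i + t}

theorem blockSet_eq_blockSet_iff {μ : List ℕ} {A B : ℕ → Set ℕ} :
    blockSet μ A = blockSet μ B ↔ ∀ i, ∀ t < μ.getD i 0, (t ∈ A i ↔ t ∈ B i) := by
  constructor
  · intro h i t ht
    have key : ∀ {A B : ℕ → Set ℕ}, blockSet μ A ⊆ blockSet μ B → t ∈ A i → t ∈ B i := by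
      intro A B hAB htA
      obtain ⟨i', t', ht', htB, he⟩ := hAB ⟨i, t, ht, htA, rfl⟩
      obtain ⟨rfl, rfl⟩ := partialSum_add_inj ht ht' he
      exact htB
    exact ⟨key h.subset, key h.symm.subset⟩
  · intro h
    ext x
    exact exists_congr fun i => ⟨fun ⟨t, ht, hA, hx⟩ => ⟨t, ht, (h i t ht).1 hA, hx⟩,
      fun ⟨t, ht, hB, hx⟩ => ⟨t, ht, (h i t ht).2 hB, hx⟩⟩

theorem image_iterate_sigmaC_blockSet (μ : List ℕ) (A : ℕ → Set ℕ) (r : ℕ) :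
    (sigmaC μ)^[r] '' blockSet μ A =
      blockSet μ fun i => {s | ∃ t < μ.getD i 0, t ∈ A i ∧ (t + r) % μ.getD i 0 = s} := by
  ext x
  constructor
  · rintro ⟨_, ⟨i, t, ht, htA, rfl⟩, rfl⟩
    exact ⟨i, _, Nat.mod_lt _ (by omega), ⟨t, ht, htA, rfl⟩,
      iterate_sigmaC_partialSum_add ht r⟩
  · rintro ⟨i, _, -, ⟨t, ht, htA, rfl⟩, rfl⟩
    exact ⟨_, ⟨i, t, ht, htA, rfl⟩, iterate_sigmaC_partialSum_add ht r⟩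

-- `N_P` is `blockSet μ (residueFamily P (f P) (g P))`: on the `i`-th cycle it is the residue class
-- of `g_P(i)` modulo `f(P)`.
def residueFamily (P : Set ℕ) (f : ℕ) (g : ℕ → ℕ) : ℕ → Set ℕ :=
  fun i => {t | i ∈ P ∧ t ≡ g i [MOD f]}

theorem image_iterate_sigmaC_residueFamily {μ : List ℕ} {P : Set ℕ} {f : ℕ} {g : ℕ → ℕ}
    (hf : ∀ i ∈ P, f ∣ μ.getD i 0) (r : ℕ) :
    (sigmaC μ)^[r] '' blockSet μ (residueFamily P f g) =
      blockSet μ (residueFamily P f fun i => g i + r) := by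
  rw [image_iterate_sigmaC_blockSet, blockSet_eq_blockSet_iff]
  intro i s hs
  by_cases hi : i ∈ P
  · simpa [residueFamily, hi] using Nat.exists_lt_modEq_add_mod_eq_iff (hf i hi) hs
  · simp [residueFamily, hi]

theorem subset_of_blockSet_residueFamily_eq {μ : List ℕ} {P P' : Set ℕ} {f f' : ℕ}
    {g g' : ℕ → ℕ} (hpos : ∀ i ∈ P, 0 < μ.getD i 0) (hf : ∀ i ∈ P, f ∣ μ.getD i 0)
    (h : blockSet μ (residueFamily P f g) = blockSet μ (residueFamily P' f' g')) : P ⊆ P' := by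
  intro i hi
  have hlt : g i % f < μ.getD i 0 :=
    (Nat.mod_lt _ (Nat.pos_of_dvd_of_pos (hf i hi) (hpos i hi))).trans_le
      (Nat.le_of_dvd (hpos i hi) (hf i hi))
  exact ((blockSet_eq_blockSet_iff.1 h i _ hlt).1 ⟨hi, Nat.mod_modEq _ _⟩).1

theorem blockSet_residueFamily_inj {μ : List ℕ} {P P' : Set ℕ} {f f' : ℕ} {g g' : ℕ → ℕ}
    (hpos : ∀ i ∈ P, 0 < μ.getD i 0) (hpos' : ∀ i ∈ P', 0 < μ.getD i 0)
    (hf : ∀ i ∈ P, f ∣ μ.getD i 0) (hf' : ∀ i ∈ P', f' ∣ μ.getD i 0)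
    (h : blockSet μ (residueFamily P f g) = blockSet μ (residueFamily P' f' g')) :
    P = P' ∧ ∀ i ∈ P, f = f' ∧ g i ≡ g' i [MOD f] := by
  obtain rfl : P = P' := (subset_of_blockSet_residueFamily_eq hpos hf h).antisymm
    (subset_of_blockSet_residueFamily_eq hpos' hf' h.symm)
  refine ⟨rfl, fun i hi => Nat.eq_and_modEq_of_forall_lt_modEq_iff (hpos i hi) (hf i hi)
    (hf' i hi) fun t ht => ?_⟩
  simpa [residueFamily, hi] using blockSet_eq_blockSet_iff.1 h i t ht

namespace EtaDatum

variable {μ : List ℕ}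

theorem getD_pos_of_mem (hpos : ∀ c ∈ μ, 0 < c) (D : EtaDatum μ) {P : Set ℕ} (hP : P ∈ D.xi)
    {i : ℕ} (hi : i ∈ P) : 0 < μ.getD i 0 := by
  have hil : i < μ.length := (D.hxi.1 P hP).2 hi
  rw [List.getD_eq_getElem _ _ hil]
  exact hpos _ (List.getElem_mem hil)

theorem NP_eq_blockSet (D : EtaDatum μ) {P : Set ℕ} (hP : P ∈ D.xi) :
    NP μ D P = blockSet μ (residueFamily P (D.f P) (D.g P)) := by
  ext x
  simp only [NP, blockSet, residueFamily, Set.mem_iUnion, Set.mem_ofPred_eq]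
  constructor
  · rintro ⟨i, hi, j, hj, rfl⟩
    obtain ⟨ht, htg⟩ :=
      (Nat.exists_mul_lt_eq_add_mul_iff (D.hf P hP i hi) (D.hg P hP i hi)).1 ⟨j, hj, rfl⟩
    exact ⟨i, _, ht, ⟨hi, htg⟩, add_assoc ..⟩
  · rintro ⟨i, t, ht, ⟨hi, htg⟩, rfl⟩
    obtain ⟨j, hj, rfl⟩ :=
      (Nat.exists_mul_lt_eq_add_mul_iff (D.hf P hP i hi) (D.hg P hP i hi)).2 ⟨ht, htg⟩
    exact ⟨i, hi, j, hj, (add_assoc ..).symm⟩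

theorem NP_mem_eta (D : EtaDatum μ) {P : Set ℕ} (hP : P ∈ D.xi) : NP μ D P ∈ eta μ D := by
  obtain ⟨i, hi⟩ := (D.hxi.1 P hP).1
  refine ⟨P, hP, D.f P, (Nat.zero_le _).trans_lt (D.hg P hP i hi), ?_⟩
  rw [D.NP_eq_blockSet hP, image_iterate_sigmaC_residueFamily (D.hf P hP)]
  congr 1
  ext i t
  simp [residueFamily, Nat.ModEq]

theorem agree_of_eta_eq (hpos : ∀ c ∈ μ, 0 < c) {D D' : EtaDatum μ} (h : eta μ D = eta μ D')
    {P : Set ℕ} (hP : P ∈ D.xi) :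
    P ∈ D'.xi ∧ D.f P = D'.f P ∧ ∀ i ∈ P, D.g P i = D'.g P i := by
  obtain ⟨Q, hQ, r, -, hPQ⟩ := h ▸ D.NP_mem_eta hP
  rw [D.NP_eq_blockSet hP, D'.NP_eq_blockSet hQ,
    image_iterate_sigmaC_residueFamily (D'.hf Q hQ)] at hPQ
  obtain ⟨rfl, hfg⟩ := blockSet_residueFamily_inj (fun _ => D.getD_pos_of_mem hpos hP)
    (fun _ => D'.getD_pos_of_mem hpos hQ) (D.hf P hP) (D'.hf Q hQ) hPQ
  have hmin := Nat.sInf_mem (D.hxi.1 P hP).1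
  -- the normalization `g_P (min P) = 0` of both data forces the rotation `r` to be trivial
  have hr : 0 ≡ r [MOD D.f P] := by simpa [D.hgmin P hP, D'.hgmin P hQ] using (hfg _ hmin).2
  refine ⟨hQ, (hfg _ hmin).1, fun i hi => ?_⟩
  have hg : D.g P i ≡ D'.g P i [MOD D.f P] := by
    simpa using (hfg i hi).2.trans (Nat.ModEq.add_left _ hr.symm)
  exact hg.eq_of_lt_of_lt (D.hg P hP i hi) ((hfg i hi).1 ▸ D'.hg P hQ i hi)

theorem ext_of_agree {D D' : EtaDatum μ} (hxi : D.xi = D'.xi)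
    (h : ∀ P ∈ D.xi, D.f P = D'.f P ∧ ∀ i ∈ P, D.g P i = D'.g P i) : D = D' := by
  have hf : D.f = D'.f := by
    funext P
    by_cases hP : P ∈ D.xi
    · exact (h P hP).1
    · rw [D.hf0 P hP, D'.hf0 P (hxi ▸ hP)]
  have hg : D.g = D'.g := by
    funext P i
    by_cases hPi : P ∈ D.xi ∧ i ∈ P
    · exact (h P hPi.1).2 i hPi.2
    · rw [not_and_or] at hPi
      rw [D.hg0 P i hPi, D'.hg0 P i (hxi ▸ hPi)]
  cases D
  cases D'
  subst hxi hf hg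
  rfl

end EtaDatum

/-- For a composition `μ` of `m` with all parts positive, the map
`(ξ, f, {g_P}) ↦ η(ξ, f, {g_P})` is injective: distinct data give distinct
`σ_μ`-invariant set partitions of `{0,…,m-1}`. -/
theorem eta_injective (μ : List ℕ) (hpos : ∀ c ∈ μ, 0 < c) :
    Function.Injective (eta μ) := by
  intro D D' h
  have hxi : D.xi = D'.xi := Set.ext fun P =>
    ⟨fun hP => (D.agree_of_eta_eq hpos h hP).1, fun hP => (D'.agree_of_eta_eq hpos h.symm hP).1⟩
  exact EtaDatum.ext_of_agree hxi fun P hP => (D.agree_of_eta_eq hpos h hP).2
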